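/- arXiv:2107.08447 — 7 statements merged into one kernel-verified Lean document; each statement's English description precedes it below -/
import Mathlib

section
/- Let E be a complex inner product space, d ≥ 1, F : Fin d → E an orthonormal family, U : E ≃ₗᵢ[ℂ] E a unitary, and p : Fin d → ℝ a probability vector (p i ≥ 0 for all i and ∑ i, p i = 1). Then for every a : Fin d, ∑ i, p i * ‖⟪F a, U (F i)⟫‖² ≤ max_{i} p i (the finite supremum of p over Fin d). (This is the paper's Result 2: in universal quantum theory with Absoluteness of Measurement, for any d-outcome rank-one projective measurement by Friend, the probability p(a|A,U) that the super-observer obtains outcome a after applying any unitary U is bounded by the maximum of the undisturbed probabilities p(i|A,𝟙).) -/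
open scoped ComplexInnerProductSpace

/-- Result 2 (AoM bound): for any d-outcome rank-one projective measurement,
`p(a|A,U) = ∑ i, p i * ‖⟪F a, U (F i)⟫‖²` is bounded by the maximum of the
undisturbed probabilities `p i`. -/
theorem stmt_0 {E : Type*} [NormedAddCommGroup E] [InnerProductSpace ℂ E]
    {d : ℕ} (hd : 1 ≤ d) (F : Fin d → E) (hF : Orthonormal ℂ F)
    (U : E ≃ₗᵢ[ℂ] E) (p : Fin d → ℝ)
    (hp : ∀ i, 0 ≤ p i) (hpsum : ∑ i, p i = 1) (a : Fin d) :
    ∑ i, p i * ‖⟪F a, U (F i)⟫‖ ^ 2 ≤ ⨆ i, p i := by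
  have hne : Nonempty (Fin d) := Fin.pos_iff_nonempty.mp hd
  set M := ⨆ i, p i with hM
  have hle : ∀ i, p i ≤ M := fun i => le_ciSup (Set.Finite.bddAbove (Set.finite_range p)) i
  have hM0 : 0 ≤ M := le_trans (hp (Classical.arbitrary _)) (hle _)
  have hUF : Orthonormal ℂ (fun i => U (F i)) := hF.comp_linearIsometryEquiv U
  have bessel : ∑ i, ‖⟪U (F i), F a⟫‖ ^ 2 ≤ ‖F a‖ ^ 2 :=
    hUF.sum_inner_products_le (F a)
  have hnorm : ‖F a‖ = 1 := hF.1 a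
  calc ∑ i, p i * ‖⟪F a, U (F i)⟫‖ ^ 2
      ≤ ∑ i, M * ‖⟪F a, U (F i)⟫‖ ^ 2 := by
        refine Finset.sum_le_sum fun i _ => ?_
        exact mul_le_mul_of_nonneg_right (hle i) (by positivity)
    _ = M * ∑ i, ‖⟪U (F i), F a⟫‖ ^ 2 := by
        rw [Finset.mul_sum]
        congr 1; ext i
        rw [← inner_conj_symm (F a), RCLike.norm_conj]
    _ ≤ M * 1 := by
        refine mul_le_mul_of_nonneg_left ?_ hM0
        simpa [hnorm] using bessel
    _ = M := mul_one M
end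

section
/- Let E be a complex inner product space, F₊ and F₋ two orthonormal vectors in E (‖F₊‖ = ‖F₋‖ = 1 and ⟪F₊, F₋⟫ = 0), U : E ≃ₗᵢ[ℂ] E a unitary, and p₊, p₋ ≥ 0 real numbers with p₊ + p₋ = 1. Define T := (p₊ * ‖⟪F₊, U F₊⟫‖² + p₋ * ‖⟪F₊, U F₋⟫‖²) − |p₊ − 1/2| − |p₋ − 1/2|. Then T ≤ 1/2. (This is the paper's elementary test of Section III.A: in universal quantum theory with Absoluteness of Measurement, the quantity T = p(+1|U) − |p(+1|𝟙) − 1/2| − |p(−1|𝟙) − 1/2| is at most 1/2, irrespective of the initial state, Friend's measurement, and the super-observer's unitary.) -/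
open scoped ComplexInnerProductSpace

/-- Section III.A elementary test: under Absoluteness of Measurement,
`T = p(+1|U) − |p(+1|𝟙) − 1/2| − |p(−1|𝟙) − 1/2| ≤ 1/2`. -/
theorem stmt_1 {E : Type*} [NormedAddCommGroup E] [InnerProductSpace ℂ E]
    (Fp Fm : E) (hFp : ‖Fp‖ = 1) (hFm : ‖Fm‖ = 1) (horth : ⟪Fp, Fm⟫ = 0)
    (U : E ≃ₗᵢ[ℂ] E) (pp pm : ℝ) (hpp : 0 ≤ pp) (hpm : 0 ≤ pm)
    (hsum : pp + pm = 1) :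
    (pp * ‖⟪Fp, U Fp⟫‖ ^ 2 + pm * ‖⟪Fp, U Fm⟫‖ ^ 2)
      - |pp - 1/2| - |pm - 1/2| ≤ 1/2 := by
  set a := ‖⟪Fp, U Fp⟫‖ ^ 2 with ha
  set b := ‖⟪Fp, U Fm⟫‖ ^ 2 with hb
  have ha0 : 0 ≤ a := sq_nonneg _
  have hb0 : 0 ≤ b := sq_nonneg _
  -- Bessel: a + b ≤ 1
  have horthv : Orthonormal ℂ (fun i : Fin 2 => U (![Fp, Fm] i)) := by
    rw [orthonormal_iff_ite]
    intro i j
    fin_cases i <;> fin_cases j <;>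
      simp [LinearIsometryEquiv.inner_map_map, horth, inner_eq_zero_symm.mp horth,
        inner_self_eq_norm_sq_to_K, hFp, hFm]
  have hbessel : a + b ≤ 1 := by
    have := horthv.sum_inner_products_le (s := Finset.univ) Fp
    rw [Fin.sum_univ_two] at this
    simp only [Matrix.cons_val_zero, Matrix.cons_val_one, Matrix.head_cons, hFp,
      one_pow] at this
    rw [norm_inner_symm (U Fp) Fp, norm_inner_symm (U Fm) Fp] at this
    linarith [this]
  have habs : |pm - 1/2| = |pp - 1/2| := by
    rw [show pm - 1/2 = -(pp - 1/2) by linarith, abs_neg]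
  rw [habs]
  rcases abs_cases (pp - 1/2) with ⟨h1, h2⟩ | ⟨h1, h2⟩ <;> nlinarith
end

section
/- Let E be a complex Hilbert space, F₊ and F₋ two orthonormal vectors in E, p₊, p₋ ≥ 0 with p₊ + p₋ = 1, and K : Fin n → (E →L[ℂ] E) a finite family of bounded operators satisfying the unitality condition ∑ i, K i ∘ (K i)† = 1 (the identity operator), where (K i)† denotes the adjoint. Then ∑ i, (p₊ * ‖⟪F₊, K i F₊⟫‖² + p₋ * ‖⟪F₊, K i F₋⟫‖²) ≤ max(p₊, p₋), and the same bound holds with F₋ in place of F₊ in the first slot. (This is inequality (28) of the paper: the Absoluteness-of-Measurement bound p(±1|Λ) ≤ max{p₊, p₋}, and hence T ≤ 1/2, persists when the super-observer applies an arbitrary unital quantum channel Λ with Kraus operators K i instead of a unitary.) -/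
/-!
Writing `⟪F, K i G⟫ = ⟪(K i)† F, G⟫`, Bessel's inequality for the orthonormal pair `F₊, F₋`
bounds the `i`-th term by `max p₊ p₋ * ‖(K i)† F‖²`, and unitality of the channel gives
`∑ i, ‖(K i)† F‖² = ⟪F, (∑ i, K i (K i)†) F⟫ = ‖F‖² = 1`.
-/

open scoped ComplexInnerProductSpace InnerProductSpace

section

variable {𝕜 E : Type*} [RCLike 𝕜] [NormedAddCommGroup E] [InnerProductSpace 𝕜 E]

theorem norm_inner_sq_add_norm_inner_sq_le {u w : E} (hu : ‖u‖ = 1) (hw : ‖w‖ = 1)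
    (huw : ⟪u, w⟫_𝕜 = 0) (v : E) : ‖⟪u, v⟫_𝕜‖ ^ 2 + ‖⟪w, v⟫_𝕜‖ ^ 2 ≤ ‖v‖ ^ 2 := by
  have hON : Orthonormal 𝕜 ![u, w] := by
    rw [orthonormal_iff_ite]
    intro i j
    fin_cases i <;> fin_cases j <;>
      simp [hu, hw, huw, inner_self_eq_norm_sq_to_K, inner_eq_zero_symm.mp huw]
  simpa [Fin.sum_univ_two] using hON.sum_inner_products_le (s := Finset.univ) v

namespace ContinuousLinearMap

variable [CompleteSpace E] {ι : Type*} (s : Finset ι)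

theorem sum_norm_adjoint_apply_sq (K : ι → E →L[𝕜] E) (x : E) :
    ∑ i ∈ s, ‖adjoint (K i) x‖ ^ 2 = RCLike.re ⟪x, (∑ i ∈ s, K i ∘L adjoint (K i)) x⟫_𝕜 := by
  simp only [sum_apply, inner_sum, map_sum, comp_apply]
  refine Finset.sum_congr rfl fun i _ => ?_
  rw [← adjoint_inner_left (K i), inner_self_eq_norm_sq]

theorem sum_norm_adjoint_apply_sq_of_sum_comp_adjoint_eq_one {K : ι → E →L[𝕜] E}
    (hK : ∑ i ∈ s, K i ∘L adjoint (K i) = 1) (x : E) :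
    ∑ i ∈ s, ‖adjoint (K i) x‖ ^ 2 = ‖x‖ ^ 2 := by
  rw [sum_norm_adjoint_apply_sq, hK, one_apply_eq_self, inner_self_eq_norm_sq]

theorem sum_mul_norm_inner_sq_le_max_mul_norm_sq {K : ι → E →L[𝕜] E}
    (hK : ∑ i ∈ s, K i ∘L adjoint (K i) = 1)
    {u w : E} (hu : ‖u‖ = 1) (hw : ‖w‖ = 1) (huw : ⟪u, w⟫_𝕜 = 0)
    {p q : ℝ} (hp : 0 ≤ p) (x : E) :
    ∑ i ∈ s, (p * ‖⟪x, K i u⟫_𝕜‖ ^ 2 + q * ‖⟪x, K i w⟫_𝕜‖ ^ 2) ≤ max p q * ‖x‖ ^ 2 := by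
  calc ∑ i ∈ s, (p * ‖⟪x, K i u⟫_𝕜‖ ^ 2 + q * ‖⟪x, K i w⟫_𝕜‖ ^ 2)
      ≤ ∑ i ∈ s, max p q * ‖adjoint (K i) x‖ ^ 2 := by
        gcongr with i
        rw [← adjoint_inner_left (K i), ← adjoint_inner_left (K i), norm_inner_symm _ u,
          norm_inner_symm _ w]
        calc p * ‖⟪u, adjoint (K i) x⟫_𝕜‖ ^ 2 + q * ‖⟪w, adjoint (K i) x⟫_𝕜‖ ^ 2
            ≤ max p q * (‖⟪u, adjoint (K i) x⟫_𝕜‖ ^ 2 + ‖⟪w, adjoint (K i) x⟫_𝕜‖ ^ 2) := by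
              rw [mul_add]
              gcongr
              exacts [le_max_left p q, le_max_right p q]
          _ ≤ max p q * ‖adjoint (K i) x‖ ^ 2 := by
              have : 0 ≤ max p q := le_max_of_le_left hp
              gcongr
              exact norm_inner_sq_add_norm_inner_sq_le hu hw huw _
    _ = max p q * ‖x‖ ^ 2 := by
        rw [← Finset.mul_sum, sum_norm_adjoint_apply_sq_of_sum_comp_adjoint_eq_one s hK]

end ContinuousLinearMap

end

theorem stmt_4_general {E : Type*} [NormedAddCommGroup E] [InnerProductSpace ℂ E]
    [CompleteSpace E]
    (Fp Fm : E) (hFp : ‖Fp‖ = 1) (hFm : ‖Fm‖ = 1) (horth : ⟪Fp, Fm⟫ = 0)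
    (pp pm : ℝ) (hpp : 0 ≤ pp)
    {n : ℕ} (K : Fin n → (E →L[ℂ] E))
    (hunital : ∑ i, (K i) ∘L (ContinuousLinearMap.adjoint (K i)) = 1) :
    (∑ i, (pp * ‖⟪Fp, K i Fp⟫‖ ^ 2 + pm * ‖⟪Fp, K i Fm⟫‖ ^ 2) ≤ max pp pm) ∧
    (∑ i, (pp * ‖⟪Fm, K i Fp⟫‖ ^ 2 + pm * ‖⟪Fm, K i Fm⟫‖ ^ 2) ≤ max pp pm) := by
  have key := ContinuousLinearMap.sum_mul_norm_inner_sq_le_max_mul_norm_sq _ hunital hFp hFm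
    horth (q := pm) hpp
  exact ⟨by simpa [hFp] using key Fp, by simpa [hFm] using key Fm⟩

/-- Inequality (28): the AoM bound `p(±1|Λ) ≤ max{p₊, p₋}` persists for an
arbitrary unital quantum channel with Kraus operators `K i`. -/
theorem stmt_4 {E : Type*} [NormedAddCommGroup E] [InnerProductSpace ℂ E]
    [CompleteSpace E]
    (Fp Fm : E) (hFp : ‖Fp‖ = 1) (hFm : ‖Fm‖ = 1) (horth : ⟪Fp, Fm⟫ = 0)
    (pp pm : ℝ) (hpp : 0 ≤ pp) (hpm : 0 ≤ pm) (hsum : pp + pm = 1)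
    {n : ℕ} (K : Fin n → (E →L[ℂ] E))
    (hunital : ∑ i, (K i) ∘L (ContinuousLinearMap.adjoint (K i)) = 1) :
    (∑ i, (pp * ‖⟪Fp, K i Fp⟫‖ ^ 2 + pm * ‖⟪Fp, K i Fm⟫‖ ^ 2) ≤ max pp pm) ∧
    (∑ i, (pp * ‖⟪Fm, K i Fp⟫‖ ^ 2 + pm * ‖⟪Fm, K i Fm⟫‖ ^ 2) ≤ max pp pm) :=
  stmt_4_general Fp Fm hFp hFm horth pp pm hpp K hunital
end

section
/- Let E be a complex inner product space, d ≥ 1, F : Fin d → E an orthonormal family, U : E ≃ₗᵢ[ℂ] E a unitary, and p, q : Fin d → ℝ probability vectors. Then (∑ i, p i * ‖⟪F 0, U (F i)⟫‖²) − ∑ i, |p i − q i| ≤ max_{i} q i. (This is the paper's Result 3, inequality (35): within quantum correlations with Absoluteness of Measurement, for any d-outcome rank-one projective measurement by Friend, the figure of merit T(q) = p(0|A,U) − ∑ᵢ |p(i|A,𝟙) − qᵢ| is at most max{q₀,…,q_{d−1}}, for every probability vector q.) -/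
open scoped ComplexInnerProductSpace

/-- Result 3, inequality (35): within QCAoM,
`T(q) = p(0|A,U) − ∑ i |p(i|A,𝟙) − q i| ≤ max_i q i`. -/
theorem stmt_7 {E : Type*} [NormedAddCommGroup E] [InnerProductSpace ℂ E]
    {d : ℕ} (hd : 0 < d) (F : Fin d → E) (hF : Orthonormal ℂ F)
    (U : E ≃ₗᵢ[ℂ] E) (p q : Fin d → ℝ)
    (hp : ∀ i, 0 ≤ p i) (hpsum : ∑ i, p i = 1)
    (hq : ∀ i, 0 ≤ q i) (hqsum : ∑ i, q i = 1) :
    (∑ i, p i * ‖⟪F ⟨0, hd⟩, U (F i)⟫‖ ^ 2) - ∑ i, |p i - q i| ≤ ⨆ i, q i := by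
  have : Nonempty (Fin d) := ⟨⟨0, hd⟩⟩
  set c : Fin d → ℝ := fun i => ‖⟪F ⟨0, hd⟩, U (F i)⟫‖ ^ 2 with hc
  have hc0 : ∀ i, 0 ≤ c i := fun i => by positivity
  have hc1 : ∀ i, c i ≤ 1 := by
    intro i
    have h := norm_inner_le_norm (𝕜 := ℂ) (F ⟨0, hd⟩) (U (F i))
    have h0 : ‖F ⟨0, hd⟩‖ = 1 := hF.1 _
    have h1 : ‖U (F i)‖ = 1 := by rw [U.norm_map]; exact hF.1 _
    rw [h0, h1, one_mul] at h
    calc c i ≤ 1 ^ 2 := by exact pow_le_pow_left₀ (norm_nonneg _) h 2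
    _ = 1 := one_pow 2
  have hUF : Orthonormal ℂ (fun i => U (F i)) := hF.comp_linearIsometryEquiv U
  have hcsum : ∑ i, c i ≤ 1 := by
    have h := hUF.sum_inner_products_le (s := Finset.univ) (F ⟨0, hd⟩)
    have h0 : ‖F ⟨0, hd⟩‖ = 1 := hF.1 _
    rw [h0, one_pow] at h
    calc ∑ i, c i = ∑ i, ‖⟪U (F i), F ⟨0, hd⟩⟫‖ ^ 2 := by
          refine Finset.sum_congr rfl fun i _ => ?_
          rw [hc]; rw [norm_inner_symm]
    _ ≤ 1 := h
  have hqsup : ∀ i, q i ≤ ⨆ j, q j := fun i =>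
    le_ciSup (Set.Finite.bddAbove (Set.finite_range q)) i
  have hsupnn : 0 ≤ ⨆ j, q j := le_trans (hq ⟨0, hd⟩) (hqsup ⟨0, hd⟩)
  have key : ∑ i, p i * c i ≤ (∑ i, |p i - q i|) + ⨆ j, q j := by
    have step : ∀ i, p i * c i ≤ |p i - q i| + q i * c i := by
      intro i
      have : p i * c i - q i * c i = (p i - q i) * c i := by ring
      nlinarith [abs_nonneg (p i - q i), le_abs_self (p i - q i), hc0 i, hc1 i,
        mul_le_of_le_one_right (abs_nonneg (p i - q i)) (hc1 i)]
    calc ∑ i, p i * c i ≤ ∑ i, (|p i - q i| + q i * c i) :=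
          Finset.sum_le_sum fun i _ => step i
    _ = (∑ i, |p i - q i|) + ∑ i, q i * c i := by rw [Finset.sum_add_distrib]
    _ ≤ (∑ i, |p i - q i|) + ⨆ j, q j := by
        gcongr
        calc ∑ i, q i * c i ≤ ∑ i, (⨆ j, q j) * c i :=
              Finset.sum_le_sum fun i _ => mul_le_mul_of_nonneg_right (hqsup i) (hc0 i)
        _ = (⨆ j, q j) * ∑ i, c i := by rw [Finset.mul_sum]
        _ ≤ (⨆ j, q j) * 1 := by exact mul_le_mul_of_nonneg_left hcsum hsupnn
        _ = ⨆ j, q j := mul_one _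
  linarith
end

section
/- Let E be a complex Hilbert space, d ≥ 1, F : Fin d → E an orthonormal family, and q : Fin d → ℝ a probability vector. Let ψ := ∑ i, (Real.sqrt (q i) : ℂ) • F i. Then: (i) ‖ψ‖ = 1; (ii) ‖⟪F i, ψ⟫‖² = q i for every i; and (iii) there exists a unitary U : E ≃ₗᵢ[ℂ] E with U ψ = F 0, so that ‖⟪F 0, U ψ⟫‖² = 1. (This is the achievability part of the paper's Result 3: in universal quantum theory with Non-absoluteness of Measurement there is a realization with p(i|A,𝟙) = qᵢ and p(0|A,U) = 1, hence T(q) = 1 for every probability vector q, violating the Absoluteness-of-Measurement bound T(q) ≤ max qᵢ.) -/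
open scoped ComplexInnerProductSpace

/-! The amplitudes of `ψ` in the orthonormal family `F` are the real numbers `√(q i)`, which gives
the Born probabilities `q i` and, by Pythagoras, `‖ψ‖ = 1`. Since `⟪ψ, F 0⟫ = √(q 0)` is real, the
reflection in the hyperplane orthogonal to `ψ - F 0` fixes `ψ + F 0` and negates `ψ - F 0`, hence is
a unitary sending `ψ` to `F 0`. -/

section

variable {𝕜 E ι : Type*} [RCLike 𝕜] [NormedAddCommGroup E] [InnerProductSpace 𝕜 E]

theorem Orthonormal.norm_sum_smul_sq [Fintype ι] {v : ι → E} (hv : Orthonormal 𝕜 v)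
    (c : ι → 𝕜) : ‖∑ i, c i • v i‖ ^ 2 = ∑ i, ‖c i‖ ^ 2 := by
  rw [@norm_sq_eq_re_inner 𝕜, hv.inner_sum, map_sum]
  refine Finset.sum_congr rfl fun i _ => ?_
  rw [RCLike.conj_mul, ← RCLike.ofReal_pow, RCLike.ofReal_re]

theorem Submodule.reflection_sub_of_inner_comm {v w : E} (hnorm : ‖v‖ = ‖w‖)
    (hinner : inner 𝕜 v w = inner 𝕜 w v) : reflection (𝕜 ∙ (v - w))ᗮ v = w := by
  set R : E ≃ₗᵢ[𝕜] E := reflection (𝕜 ∙ (v - w))ᗮ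
  suffices R v + R v = w + w by
    apply smul_right_injective E (two_ne_zero : (2 : 𝕜) ≠ 0)
    simpa [two_smul] using this
  have h₁ : R (v - w) = -(v - w) := reflection_orthogonalComplement_singleton_eq_neg (v - w)
  have h₂ : R (v + w) = v + w := by
    apply reflection_mem_subspace_eq_self
    rw [Submodule.mem_orthogonal_singleton_iff_inner_left, inner_sub_right, inner_add_left,
      inner_add_left, inner_self_eq_norm_sq_to_K, inner_self_eq_norm_sq_to_K, hnorm, hinner]
    ring
  convert congr_arg₂ (· + ·) h₂ h₁ using 1
  · simp only [map_add, map_sub]; abel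
  · abel

end

theorem stmt_8_general {E : Type*} [NormedAddCommGroup E] [InnerProductSpace ℂ E]
    {d : ℕ} (hd : 0 < d) (F : Fin d → E) (hF : Orthonormal ℂ F)
    (q : Fin d → ℝ) (hq : ∀ i, 0 ≤ q i) (hqsum : ∑ i, q i = 1)
    (ψ : E) (hψ : ψ = ∑ i, ((Real.sqrt (q i) : ℝ) : ℂ) • F i) :
    ‖ψ‖ = 1 ∧ (∀ i, ‖⟪F i, ψ⟫‖ ^ 2 = q i) ∧
      ∃ U : E ≃ₗᵢ[ℂ] E, U ψ = F ⟨0, hd⟩ ∧ ‖⟪F ⟨0, hd⟩, U ψ⟫‖ ^ 2 = 1 := by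
  have hamp : ∀ i, ⟪F i, ψ⟫ = ((Real.sqrt (q i) : ℝ) : ℂ) := fun i => by
    rw [hψ, hF.inner_right_fintype]
  have hprob : ∀ i, ‖⟪F i, ψ⟫‖ ^ 2 = q i := fun i => by
    rw [hamp, Complex.norm_real, Real.norm_eq_abs, sq_abs, Real.sq_sqrt (hq i)]
  have hnorm : ‖ψ‖ = 1 := by
    have hsq : ‖ψ‖ ^ 2 = 1 := by
      rw [hψ, hF.norm_sum_smul_sq]
      simp_rw [← hamp, hprob]
      exact hqsum
    exact (pow_eq_one_iff_of_nonneg (norm_nonneg ψ) two_ne_zero).1 hsq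
  set e := F ⟨0, hd⟩
  have he : ‖e‖ = 1 := hF.1 _
  have hU : Submodule.reflection (ℂ ∙ (ψ - e))ᗮ ψ = e :=
    Submodule.reflection_sub_of_inner_comm (hnorm.trans he.symm)
      (by rw [← inner_conj_symm, hamp, Complex.conj_ofReal])
  refine ⟨hnorm, hprob, _, hU, ?_⟩
  rw [hU, inner_self_eq_norm_sq_to_K, he]
  simp

/-- Achievability part of Result 3 (NoM): with `ψ = ∑ i √(q i) F i` one has
`‖ψ‖ = 1`, `p(i|A,𝟙) = q i`, and a unitary `U` with `U ψ = F 0`,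
hence `p(0|A,U) = 1`. -/
theorem stmt_8 {E : Type*} [NormedAddCommGroup E] [InnerProductSpace ℂ E]
    [CompleteSpace E]
    {d : ℕ} (hd : 0 < d) (F : Fin d → E) (hF : Orthonormal ℂ F)
    (q : Fin d → ℝ) (hq : ∀ i, 0 ≤ q i) (hqsum : ∑ i, q i = 1)
    (ψ : E) (hψ : ψ = ∑ i, ((Real.sqrt (q i) : ℝ) : ℂ) • F i) :
    ‖ψ‖ = 1 ∧ (∀ i, ‖⟪F i, ψ⟫‖ ^ 2 = q i) ∧
      ∃ U : E ≃ₗᵢ[ℂ] E, U ψ = F ⟨0, hd⟩ ∧ ‖⟪F ⟨0, hd⟩, U ψ⟫‖ ^ 2 = 1 :=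
  stmt_8_general hd F hF q hq hqsum ψ hψ
end

section
/- Let E be a complex Hilbert space, d ≥ 1, F : Fin d → E an orthonormal family, and q : Fin d → ℝ a probability vector. Then there exists a unitary U : E ≃ₗᵢ[ℂ] E such that ∑ i, q i * ‖⟪F 0, U (F i)⟫‖² = max_{i} q i. (This is the tightness part of the paper's Result 3: the Absoluteness-of-Measurement upper bound T(q) ≤ max{q₀,…,q_{d−1}} is achieved, namely by preparing the state with p(i|A,𝟙) = qᵢ and choosing a unitary that maps the post-measurement state F_{i_m} of a maximal-probability outcome to F 0.) -/
open scoped ComplexInnerProductSpace InnerProductSpace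

/-!
Pick an outcome `i₀` of maximal probability and a unitary `U` with `U (F i₀) = F 0`, namely the
reflection exchanging the two orthonormal vectors. Since `U` preserves inner products,
`⟪F 0, U (F i)⟫ = ⟪F i₀, F i⟫ = δ_{i₀ i}`, so the sum collapses to `q i₀ = max_i q i`.
-/

namespace Submodule

variable {𝕜 E : Type*} [RCLike 𝕜] [NormedAddCommGroup E] [InnerProductSpace 𝕜 E]

theorem reflection_sub_of_inner_comm_s9 {v w : E} (h : ‖v‖ = ‖w‖) (hvw : ⟪v, w⟫_𝕜 = ⟪w, v⟫_𝕜) :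
    reflection (𝕜 ∙ (v - w))ᗮ v = w := by
  set R : E ≃ₗᵢ[𝕜] E := reflection (𝕜 ∙ (v - w))ᗮ
  suffices R v + R v = w + w by
    apply smul_right_injective E (by simp : (2 : 𝕜) ≠ 0)
    simpa [two_smul] using this
  have h₁ : R (v - w) = -(v - w) := reflection_orthogonalComplement_singleton_eq_neg (v - w)
  have h₂ : R (v + w) = v + w := by
    apply reflection_mem_subspace_eq_self
    rw [mem_orthogonal_singleton_iff_inner_right, inner_sub_left, inner_add_right,
      inner_add_right, inner_self_eq_norm_sq_to_K, inner_self_eq_norm_sq_to_K, h, hvw]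
    ring
  convert congr_arg₂ (· + ·) h₂ h₁ using 1
  · simp
  · abel

end Submodule

namespace Orthonormal

variable {𝕜 E ι : Type*} [RCLike 𝕜] [NormedAddCommGroup E] [InnerProductSpace 𝕜 E]
  {v : ι → E}

theorem exists_linearIsometryEquiv_apply_eq (hv : Orthonormal 𝕜 v) (i j : ι) :
    ∃ U : E ≃ₗᵢ[𝕜] E, U (v i) = v j := by
  classical
  exact ⟨_, Submodule.reflection_sub_of_inner_comm_s9 ((hv.1 i).trans (hv.1 j).symm)
    (by simp only [orthonormal_iff_ite.mp hv, eq_comm])⟩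

theorem sum_mul_norm_inner_sq [Fintype ι] (hv : Orthonormal 𝕜 v) (c : ι → ℝ) (j : ι) :
    ∑ i, c i * ‖⟪v j, v i⟫_𝕜‖ ^ 2 = c j := by
  classical
  simp [orthonormal_iff_ite.mp hv, apply_ite]

end Orthonormal

theorem stmt_9_general {E : Type*} [NormedAddCommGroup E] [InnerProductSpace ℂ E]
    {d : ℕ} (hd : 0 < d) (F : Fin d → E) (hF : Orthonormal ℂ F)
    (q : Fin d → ℝ) :
    ∃ U : E ≃ₗᵢ[ℂ] E,
      ∑ i, q i * ‖⟪F ⟨0, hd⟩, U (F i)⟫‖ ^ 2 = ⨆ i, q i := by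
  have : Nonempty (Fin d) := ⟨⟨0, hd⟩⟩
  obtain ⟨i₀, hi₀⟩ := exists_eq_ciSup_of_finite (f := q)
  obtain ⟨U, hU⟩ := hF.exists_linearIsometryEquiv_apply_eq i₀ ⟨0, hd⟩
  refine ⟨U, ?_⟩
  simp_rw [← hU, LinearIsometryEquiv.inner_map_map]
  rw [hF.sum_mul_norm_inner_sq, hi₀]

/-- Tightness part of Result 3: the AoM upper bound `max_i q i` is achieved by
some unitary `U`, i.e. `∑ i, q i * ‖⟪F 0, U (F i)⟫‖² = max_i q i`. -/
theorem stmt_9 {E : Type*} [NormedAddCommGroup E] [InnerProductSpace ℂ E]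
    [CompleteSpace E]
    {d : ℕ} (hd : 0 < d) (F : Fin d → E) (hF : Orthonormal ℂ F)
    (q : Fin d → ℝ) (hq : ∀ i, 0 ≤ q i) (hqsum : ∑ i, q i = 1) :
    ∃ U : E ≃ₗᵢ[ℂ] E,
      ∑ i, q i * ‖⟪F ⟨0, hd⟩, U (F i)⟫‖ ^ 2 = ⨆ i, q i :=
  stmt_9_general hd F hF q
end

section
/- Let p : Fin 2 → Fin 2 → Fin 2 → Fin 2 → ℝ (arguments a, b, x, y) satisfy p a b x y ≥ 0 for all a, b, x, y and ∑_{a,b} p a b x y = 1 for each fixed x, y. Let s : Fin 2 → ℝ with 0 ≤ s x ≤ 1. Define P₀ := (1/4) * ∑ over all (a,b,x,y) with a + b ≡ x*y (mod 2) of p a b x y, and P₁ := (1/4) * ∑ over all (a,b,x,y) with a + b ≡ x*y (mod 2) of (s x * p a b x y + (1 − s x) * p (a+1) b x y), where a+1 is addition mod 2. Then P₁ ≤ max(P₀, 3/2 − P₀). (This is the combinatorial content of the paper's Result 4, inequality (52): in quantum theory with Absoluteness of Measurement, the CHSH-type quantity P₁ obtained after Wigner's unitary on Alice's Lab, whose unitary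 coefficients satisfy |α^x_{a,a}|² = s_x and |α^x_{a⊕1,a}|² = 1 − s_x, is bounded by max{P₀, 3/2 − P₀}.) -/
/-!
Write `W x` for the total CHSH winning probability of input `x`, summed over Bob's two inputs, so
that `0 ≤ W x ≤ 2` and `P₀ = (W 0 + W 1) / 4`. Relabelling Alice's outcome `a ↦ a + 1` turns every
winning pair into a losing one, so the unitary replaces `W x` by the convex combination
`s x * W x + (1 - s x) * (2 - W x) ≤ max (W x) (2 - W x)`. A case split on `W 0, W 1 ≷ 1` bounds
the resulting sum by `max P₀ (3/2 - P₀)`.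
-/

open Finset

theorem Finset.sum_comm_pairs {α β γ δ M : Type*} [AddCommMonoid M] (s : Finset α)
    (t : Finset β) (u : Finset γ) (v : Finset δ) (F : α → β → γ → δ → M) :
    ∑ a ∈ s, ∑ b ∈ t, ∑ x ∈ u, ∑ y ∈ v, F a b x y =
      ∑ x ∈ u, ∑ y ∈ v, ∑ a ∈ s, ∑ b ∈ t, F a b x y :=
  calc ∑ a ∈ s, ∑ b ∈ t, ∑ x ∈ u, ∑ y ∈ v, F a b x y
      = ∑ a ∈ s, ∑ x ∈ u, ∑ y ∈ v, ∑ b ∈ t, F a b x y :=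
        sum_congr rfl fun _ _ => sum_comm.trans (sum_congr rfl fun _ _ => sum_comm)
    _ = ∑ x ∈ u, ∑ y ∈ v, ∑ a ∈ s, ∑ b ∈ t, F a b x y :=
        sum_comm.trans (sum_congr rfl fun _ _ => sum_comm)

def chshWin (q : Fin 2 → Fin 2 → ℝ) (c : Fin 2) : ℝ :=
  ∑ a, ∑ b, if a + b = c then q a b else 0

theorem chshWin_le_sum {q : Fin 2 → Fin 2 → ℝ} (hq : ∀ a b, 0 ≤ q a b) (c : Fin 2) :
    chshWin q c ≤ ∑ a, ∑ b, q a b :=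
  sum_le_sum fun _ _ => sum_le_sum fun _ _ => by split_ifs <;> simp [hq]

theorem chshWin_mix_flip (q : Fin 2 → Fin 2 → ℝ) (t : ℝ) (c : Fin 2) :
    chshWin (fun a b => t * q a b + (1 - t) * q (a + 1) b) c =
      t * chshWin q c + (1 - t) * (∑ a, ∑ b, q a b - chshWin q c) := by
  fin_cases c <;> simp [chshWin, Fin.sum_univ_two] <;> ring

theorem add_max_two_sub_le {u v : ℝ} (hu : u ≤ 2) (hv : v ≤ 2) :
    (max u (2 - u) + max v (2 - v)) / 4 ≤ max ((u + v) / 4) (3 / 2 - (u + v) / 4) := by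
  rcases le_total u 1 with hu | hu <;> rcases le_total v 1 with hv | hv <;>
    simp only [max_def] <;> split_ifs <;> linarith

/-- Combinatorial content of Result 4, inequality (52): the CHSH quantity `P₁`
after Wigner's unitary is bounded by `max{P₀, 3/2 − P₀}`. -/
theorem stmt_10 (p : Fin 2 → Fin 2 → Fin 2 → Fin 2 → ℝ)
    (hp : ∀ a b x y, 0 ≤ p a b x y)
    (hnorm : ∀ x y, ∑ a, ∑ b, p a b x y = 1)
    (s : Fin 2 → ℝ) (hs0 : ∀ x, 0 ≤ s x) (hs1 : ∀ x, s x ≤ 1)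
    (P₀ P₁ : ℝ)
    (hP₀ : P₀ = (1/4) * ∑ a, ∑ b, ∑ x, ∑ y,
      if a + b = x * y then p a b x y else 0)
    (hP₁ : P₁ = (1/4) * ∑ a, ∑ b, ∑ x, ∑ y,
      if a + b = x * y then s x * p a b x y + (1 - s x) * p (a + 1) b x y else 0) :
    P₁ ≤ max P₀ (3/2 - P₀) := by
  set W : Fin 2 → ℝ := fun x => ∑ y, chshWin (p · · x y) (x * y)
  have hW : ∀ x, W x ≤ 2 := fun x =>
    calc W x ≤ ∑ _y : Fin 2, (1 : ℝ) :=
          sum_le_sum fun y _ => (chshWin_le_sum (hp · · x y) _).trans_eq (hnorm x y)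
      _ = 2 := by norm_num
  have hP₀W : P₀ = (W 0 + W 1) / 4 := by
    rw [hP₀, sum_comm_pairs, Fin.sum_univ_two]
    simp only [W, chshWin]
    ring
  have hmix : ∀ x y, (∑ a, ∑ b, if a + b = x * y then
      s x * p a b x y + (1 - s x) * p (a + 1) b x y else 0) =
      s x * chshWin (p · · x y) (x * y) + (1 - s x) * (1 - chshWin (p · · x y) (x * y)) :=
    fun x y => (chshWin_mix_flip (p · · x y) (s x) (x * y)).trans (by rw [hnorm])
  have hP₁W : P₁ = ∑ x, (s x * W x + (1 - s x) * (2 - W x)) / 4 := by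
    rw [hP₁, sum_comm_pairs]
    simp only [hmix]
    simp only [W, Fin.sum_univ_two]
    ring
  calc P₁ ≤ (max (W 0) (2 - W 0) + max (W 1) (2 - W 1)) / 4 := by
        rw [hP₁W, Fin.sum_univ_two, ← add_div]
        gcongr <;> exact Convex.combo_le_max _ _ (hs0 _) (sub_nonneg.2 (hs1 _)) (by ring)
    _ ≤ max P₀ (3/2 - P₀) := hP₀W ▸ add_max_two_sub_le (hW 0) (hW 1)
end
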